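/- Let X = R·U where R ≥ 0 satisfies −log P(R > x) ~ h(x) (h increasing, concave, h(x)=o(x), log x = o(h(x))), and U is a random unit vector in ℝ^d, asymptotically independent of R, whose support is all of S^{d−1}. Fix a > 0 and a unit vector v. Then lim_{n→∞} log P(⟨v, X⟩ > na) / h(na) = −1. -/
import Mathlib


open Filter MeasureTheory
open scoped RealInnerProductSpace

/-- Projection asymptotics (Lemma 2 of the paper): under assumptions (A1)-(A2),
for `X = R • U`, a fixed unit vector `v` and `a > 0`,
`log P(⟨v, X⟩ > n a) / h(n a) → -1`. -/
theorem stmt_7 {Ω : Type*} [MeasurableSpace Ω] (μ : Measure Ω) [IsProbabilityMeasure μ]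
    (d : ℕ) (R : Ω → ℝ) (U : Ω → EuclideanSpace ℝ (Fin d))
    (hRmeas : Measurable R) (hUmeas : Measurable U)
    (hRnonneg : ∀ ω, 0 ≤ R ω)
    (h : ℝ → ℝ)
    -- (A1): -log P(R > x) ~ h(x), h increasing concave, h(x)=o(x), log x = o(h x)
    (hmono : MonotoneOn h (Set.Ici (0 : ℝ)))
    (hconc : ConcaveOn ℝ (Set.Ici (0 : ℝ)) h)
    (h_o : Tendsto (fun x => h x / x) atTop (nhds 0))
    (hlog : Tendsto (fun x => Real.log x / h x) atTop (nhds 0))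
    (htail : Tendsto (fun x => -Real.log ((μ {ω | x < R ω}).toReal) / h x)
      atTop (nhds 1))
    -- (A2): U lives on the unit sphere, has full support there, and is
    -- asymptotically independent of R
    (hUsphere : ∀ ω, ‖U ω‖ = 1)
    (hUsupp : ∀ y : EuclideanSpace ℝ (Fin d), ‖y‖ = 1 → ∀ δ > (0 : ℝ),
      0 < (μ {ω | ‖U ω - y‖ < δ}).toReal)
    (hasymp : ∀ y : EuclideanSpace ℝ (Fin d), ‖y‖ = 1 → ∀ δ > (0 : ℝ),
      Tendsto (fun x =>
          (μ ({ω | ‖U ω - y‖ < δ} ∩ {ω | x < R ω})).toReal / (μ {ω | x < R ω}).toReal)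
        atTop (nhds ((μ {ω | ‖U ω - y‖ < δ}).toReal)))
    (v : EuclideanSpace ℝ (Fin d)) (hv : ‖v‖ = 1) (a : ℝ) (ha : 0 < a) :
    Tendsto (fun n : ℕ =>
        Real.log ((μ {ω | (n : ℝ) * a < ⟪v, R ω • U ω⟫}).toReal) / h ((n : ℝ) * a))
      atTop (nhds (-1)) := by
  have hμne : ∀ s : Set Ω, μ s ≠ ⊤ := fun s => (measure_lt_top μ s).ne
  have hpR1 : ∀ x : ℝ, (μ {ω | x < R ω}).toReal ≤ 1 := by
    intro x
    calc (μ {ω | x < R ω}).toReal ≤ (μ Set.univ).toReal :=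
          ENNReal.toReal_mono (hμne _) (measure_mono (Set.subset_univ _))
      _ = 1 := by simp
  have hgle : ∀ x : ℝ, Real.log ((μ {ω | x < R ω}).toReal) ≤ 0 := fun x =>
    Real.log_nonpos ENNReal.toReal_nonneg (hpR1 x)
  have hev1 : ∀ᶠ x in atTop, (1:ℝ)/2 < -Real.log ((μ {ω | x < R ω}).toReal) / h x :=
    htail.eventually (eventually_gt_nhds (by norm_num))
  have hhpos : ∀ᶠ x in atTop, 0 < h x := by
    filter_upwards [hev1] with x hx
    by_contra hh
    push_neg at hh
    rcases eq_or_lt_of_le hh with h0 | h0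
    · rw [h0, div_zero] at hx; linarith
    · have : -Real.log ((μ {ω | x < R ω}).toReal) / h x ≤ 0 :=
        div_nonpos_of_nonneg_of_nonpos (by linarith [hgle x]) h0.le
      linarith
  have hpRpos : ∀ᶠ x in atTop, 0 < (μ {ω | x < R ω}).toReal := by
    filter_upwards [hev1] with x hx
    rcases eq_or_lt_of_le (ENNReal.toReal_nonneg : 0 ≤ (μ {ω | x < R ω}).toReal) with h0 | h0
    · rw [← h0, Real.log_zero, neg_zero, zero_div] at hx; linarith
    · exact h0
  have hhtop : Tendsto h atTop atTop := by
    apply tendsto_atTop_mono' atTop ?_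
      (Real.tendsto_log_atTop.const_mul_atTop (by norm_num : (0:ℝ) < 2))
    filter_upwards [hhpos, hlog.eventually (eventually_lt_nhds (by norm_num : (0:ℝ) < 1/2)),
      eventually_ge_atTop (1:ℝ)] with x hx1 hx2 hx3
    have hlx : 0 ≤ Real.log x := Real.log_nonneg hx3
    have := (div_lt_iff₀ hx1).1 hx2
    linarith
  have hgdiv : Tendsto (fun x => Real.log ((μ {ω | x < R ω}).toReal) / h x) atTop (nhds (-1)) := by
    have h2 := htail.neg
    simp only [neg_div, neg_neg] at h2
    exact h2
  have hinner_le : ∀ ω, ⟪v, R ω • U ω⟫ ≤ R ω := by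
    intro ω
    rw [real_inner_smul_right]
    calc R ω * ⟪v, U ω⟫ ≤ R ω * 1 := by
          apply mul_le_mul_of_nonneg_left _ (hRnonneg ω)
          calc ⟪v, U ω⟫ ≤ ‖v‖ * ‖U ω‖ := real_inner_le_norm v (U ω)
            _ = 1 := by rw [hv, hUsphere ω]; ring
      _ = R ω := mul_one _
  have hp1_le : ∀ x : ℝ, (μ {ω | x < ⟪v, R ω • U ω⟫}).toReal ≤ (μ {ω | x < R ω}).toReal :=
    fun x => ENNReal.toReal_mono (hμne _)
      (measure_mono fun ω hω => lt_of_lt_of_le hω (hinner_le ω))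
  have hLB : ∀ c : ℝ, 0 < c → c < 1 → ∃ q : ℝ, 0 < q ∧
      ∀ᶠ x in atTop, q * (μ {ω | x / c < R ω}).toReal ≤ (μ {ω | x < ⟪v, R ω • U ω⟫}).toReal
        ∧ 0 < (μ {ω | x < ⟪v, R ω • U ω⟫}).toReal ∧ 0 < (μ {ω | x / c < R ω}).toReal := by
    intro c hc0 hc1
    set δ := Real.sqrt (2 * (1 - c)) with hδdef
    have hδpos : 0 < δ := Real.sqrt_pos.2 (by linarith)
    have hδsq : δ ^ 2 = 2 * (1 - c) := Real.sq_sqrt (by linarith)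
    have hppos : 0 < (μ {ω | ‖U ω - v‖ < δ}).toReal := hUsupp v hv δ hδpos
    set p := (μ {ω | ‖U ω - v‖ < δ}).toReal with hpdef
    refine ⟨p / 2, by linarith, ?_⟩
    have hdc : Tendsto (fun x : ℝ => x / c) atTop atTop := tendsto_id.atTop_div_const hc0
    have hratio := (hasymp v hv δ hδpos).eventually (eventually_gt_nhds (by linarith : p / 2 < p))
    have hmain : ∀ᶠ y in atTop, p / 2 * (μ {ω | y < R ω}).toReal
        ≤ (μ ({ω | ‖U ω - v‖ < δ} ∩ {ω | y < R ω})).toReal ∧ 0 < (μ {ω | y < R ω}).toReal := by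
      filter_upwards [hratio, hpRpos] with y h1 h2
      refine ⟨?_, h2⟩
      have := (lt_div_iff₀ h2).1 h1
      linarith
    filter_upwards [hdc.eventually hmain, eventually_gt_atTop (0:ℝ)] with x hx hx0
    obtain ⟨hx1, hx2⟩ := hx
    have hsub2 : {ω | ‖U ω - v‖ < δ} ∩ {ω | x / c < R ω} ⊆ {ω | x < ⟪v, R ω • U ω⟫} := by
      rintro ω ⟨hω1, hω2⟩
      have hω1' : ‖U ω - v‖ < δ := hω1
      have hω2' : x / c < R ω := hω2
      have hnormsq : ‖U ω - v‖ ^ 2 < δ ^ 2 :=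
        pow_lt_pow_left₀ hω1' (norm_nonneg _) (by norm_num)
      have hns := norm_sub_sq_real (U ω) v
      rw [hUsphere ω, hv, real_inner_comm v (U ω)] at hns
      have hinner_gt : c < ⟪v, U ω⟫ := by nlinarith
      have hRpos : 0 < R ω := lt_trans (by positivity) hω2'
      show x < ⟪v, R ω • U ω⟫
      rw [real_inner_smul_right]
      calc x = x / c * c := by field_simp
        _ < R ω * c := mul_lt_mul_of_pos_right hω2' hc0
        _ < R ω * ⟪v, U ω⟫ := mul_lt_mul_of_pos_left hinner_gt hRpos
    have hle := ENNReal.toReal_mono (hμne _) (measure_mono hsub2)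
    have hq1 : p / 2 * (μ {ω | x / c < R ω}).toReal
        ≤ (μ {ω | x < ⟪v, R ω • U ω⟫}).toReal := le_trans hx1 hle
    exact ⟨hq1, lt_of_lt_of_le (by positivity) hq1, hx2⟩
  have key : Tendsto (fun x : ℝ =>
      Real.log ((μ {ω | x < ⟪v, R ω • U ω⟫}).toReal) / h x) atTop (nhds (-1)) := by
    rw [tendsto_order]
    constructor
    · intro b hb
      have hbpos : 0 < -b := by linarith
      have hinv : 1 / (-b) < 1 := by rw [div_lt_one hbpos]; linarith
      have hinvpos : 0 < 1 / (-b) := by positivity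
      set c : ℝ := (1 + 1 / (-b)) / 2 with hcdef
      have hc0 : 0 < c := by rw [hcdef]; linarith
      have hc1 : c < 1 := by rw [hcdef]; linarith
      have hcb : 1 / (-b) < c := by rw [hcdef]; linarith
      have hbc1 : 1 < -b * c := by
        rw [div_lt_iff₀ hbpos] at hcb
        linarith
      set ε : ℝ := (-b * c - 1) / 2 with hεdef
      have hεpos : 0 < ε := by rw [hεdef]; linarith
      have hkey2 : (1 + ε) / c < -b := by
        rw [div_lt_iff₀ hc0, hεdef]; linarith
      obtain ⟨q, hq, hev⟩ := hLB c hc0 hc1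
      have htail2 : ∀ᶠ y in atTop,
          -(1 + ε) * h y < Real.log ((μ {ω | y < R ω}).toReal) := by
        filter_upwards [htail.eventually (eventually_lt_nhds (by linarith : (1:ℝ) < 1 + ε)),
          hhpos] with y h1 h2
        have := (div_lt_iff₀ h2).1 h1
        linarith
      have hdc : Tendsto (fun x : ℝ => x / c) atTop atTop := tendsto_id.atTop_div_const hc0
      set K : ℝ := Real.log q + (1 + ε) * ((1 - c) * h 0) / c with hKdef
      have hKlim : Tendsto (fun x => K / h x) atTop (nhds 0) :=
        tendsto_const_nhds.div_atTop hhtop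
      have hKev : ∀ᶠ x in atTop, b + (1 + ε) / c < K / h x :=
        hKlim.eventually (eventually_gt_nhds (by linarith))
      filter_upwards [hdc.eventually htail2, hev, hhpos, hKev, eventually_ge_atTop (0:ℝ)]
        with x hx1 hx2 hx3 hx4 hx5
      obtain ⟨hx2a, hx2b, hx2c⟩ := hx2
      have hconcx : c * h (x / c) + (1 - c) * h 0 ≤ h x := by
        have hxc : x / c ∈ Set.Ici (0:ℝ) := Set.mem_Ici.2 (by positivity)
        have hcc := hconc.2 hxc (Set.mem_Ici.2 le_rfl) (le_of_lt hc0)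
          (by linarith : (0:ℝ) ≤ 1 - c) (by ring)
        have hxx : c * (x / c) = x := by field_simp
        simpa [smul_eq_mul, hxx] using hcc
      have hlogp1 : Real.log q + Real.log ((μ {ω | x / c < R ω}).toReal)
          ≤ Real.log ((μ {ω | x < ⟪v, R ω • U ω⟫}).toReal) := by
        rw [← Real.log_mul (ne_of_gt hq) (ne_of_gt hx2c)]
        exact Real.log_le_log (by positivity) hx2a
      have hhxc_ub : h (x / c) ≤ (h x - (1 - c) * h 0) / c := by
        rw [le_div_iff₀ hc0]; linarith
      have hnum : K - (1 + ε) / c * h x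
          ≤ Real.log ((μ {ω | x < ⟪v, R ω • U ω⟫}).toReal) := by
        have h3 := mul_le_mul_of_nonpos_left hhxc_ub (by linarith : -(1 + ε) ≤ 0)
        have h2 : K - (1 + ε) / c * h x
            = Real.log q + -(1 + ε) * ((h x - (1 - c) * h 0) / c) := by
          rw [hKdef]; ring
        rw [h2]
        calc Real.log q + -(1 + ε) * ((h x - (1 - c) * h 0) / c)
            ≤ Real.log q + -(1 + ε) * h (x / c) := by linarith
          _ ≤ Real.log q + Real.log ((μ {ω | x / c < R ω}).toReal) := by linarith
          _ ≤ _ := hlogp1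
      have hdiv : (K - (1 + ε) / c * h x) / h x
          ≤ Real.log ((μ {ω | x < ⟪v, R ω • U ω⟫}).toReal) / h x :=
        (div_le_div_iff_of_pos_right hx3).2 hnum
      have heq : (K - (1 + ε) / c * h x) / h x = K / h x - (1 + ε) / c := by
        rw [sub_div, mul_div_assoc, div_self (ne_of_gt hx3), mul_one]
      rw [heq] at hdiv
      linarith
    · intro b hb
      obtain ⟨q, hq, hev⟩ := hLB (1/2) (by norm_num) (by norm_num)
      filter_upwards [hev, hhpos, hgdiv.eventually (eventually_lt_nhds hb)] with x hx1 hx2 hx3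
      obtain ⟨-, hpos, -⟩ := hx1
      calc Real.log ((μ {ω | x < ⟪v, R ω • U ω⟫}).toReal) / h x
          ≤ Real.log ((μ {ω | x < R ω}).toReal) / h x :=
            (div_le_div_iff_of_pos_right hx2).2 (Real.log_le_log hpos (hp1_le x))
        _ < b := hx3
  have hna : Tendsto (fun n : ℕ => (n : ℝ) * a) atTop atTop :=
    tendsto_natCast_atTop_atTop.atTop_mul_const ha
  exact key.comp hna
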